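/- For δ > 0, define Φ(s) = I_1(s)·(I_3(s) + I_1(s)·(1 + δ/2)) / I_2(s)². Then Φ(s)/s² → 1 + δ/2 as s → −∞; in particular Φ(s) → +∞ as s → −∞. -/

import Mathlib

/-!
For `s < 0` put `u = -2s`. Completing the square, `-(z - s)² = -s² - u z - z²`, and the
substitution `w = u z` give `I_n(s) = e^{-s²} u^{-(n+1)} G_n(u)` with
`G_n(u) = ∫₀^∞ wⁿ e^{-w} e^{-(w/u)²} dw`, which tends to `n!` as `u → ∞` by dominated
convergence. The Gaussian factors and the powers of `u` cancel in
`I₁ I₃ / I₂² → 1! 3! / 2!²`, whereas `I₁² / I₂² = (u G₁ / G₂)² ~ u² / 4 = s²`;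
so `Φ(s) = (1 + δ/2) s² + O(1)`.
-/

open MeasureTheory Real Filter

noncomputable def In (n : ℕ) (s : ℝ) : ℝ :=
  ∫ z in Set.Ioi (0 : ℝ), z ^ n * Real.exp (-(z - s) ^ 2)

noncomputable def Phi (δ : ℝ) (s : ℝ) : ℝ :=
  In 1 s * (In 3 s + In 1 s * (1 + δ / 2)) / (In 2 s) ^ 2

open scoped Nat Topology

noncomputable def dampedGammaIntegral (n : ℕ) (u : ℝ) : ℝ :=
  ∫ w in Set.Ioi (0 : ℝ), w ^ n * exp (-w) * exp (-(w / u) ^ 2)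

lemma integral_pow_mul_exp_neg_Ioi (n : ℕ) :
    ∫ w in Set.Ioi (0 : ℝ), w ^ n * exp (-w) = n ! := by
  rw [← Gamma_nat_eq_factorial, Gamma_eq_integral (by positivity)]
  refine setIntegral_congr_fun measurableSet_Ioi fun w _ => ?_
  rw [add_sub_cancel_right, rpow_natCast, mul_comm]

lemma integrableOn_pow_mul_exp_neg_Ioi (n : ℕ) :
    IntegrableOn (fun w : ℝ => w ^ n * exp (-w)) (Set.Ioi 0) := by
  refine (GammaIntegral_convergent (s := n + 1) (by positivity)).congr_fun (fun w _ => ?_)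
    measurableSet_Ioi
  simp only [add_sub_cancel_right, rpow_natCast, mul_comm]

lemma tendsto_dampedGammaIntegral_atTop (n : ℕ) :
    Tendsto (dampedGammaIntegral n) atTop (𝓝 n !) := by
  rw [← integral_pow_mul_exp_neg_Ioi]
  refine tendsto_integral_filter_of_dominated_convergence _
    (.of_forall fun u => (Continuous.aestronglyMeasurable (by fun_prop)).restrict) ?_
    (integrableOn_pow_mul_exp_neg_Ioi n) (ae_restrict_of_forall_mem measurableSet_Ioi ?_)
  · refine .of_forall fun u => ae_restrict_of_forall_mem measurableSet_Ioi fun w (hw : 0 < w) => ?_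
    rw [norm_of_nonneg (by positivity)]
    exact mul_le_of_le_one_right (by positivity) (exp_le_one_iff.mpr (by nlinarith))
  · intro w _
    have hdamp : Tendsto (fun u : ℝ => exp (-(w / u) ^ 2)) atTop (𝓝 1) := by
      simpa using ((tendsto_const_nhds.div_atTop tendsto_id).pow 2).neg.rexp
    simpa using hdamp.const_mul (w ^ n * exp (-w))

lemma In_eq_of_neg (n : ℕ) {s : ℝ} (hs : s < 0) :
    In n s = exp (-s ^ 2) * (-2 * s)⁻¹ ^ (n + 1) * dampedGammaIntegral n (-2 * s) := by
  set u := -2 * s with hu_def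
  have hu : 0 < u := by linarith
  calc In n s
      = ∫ z in Set.Ioi (0 : ℝ), exp (-s ^ 2) * u⁻¹ ^ n *
          ((u * z) ^ n * exp (-(u * z)) * exp (-(u * z / u) ^ 2)) := by
        refine setIntegral_congr_fun measurableSet_Ioi fun z _ => ?_
        have hsq : -(z - s) ^ 2 = -s ^ 2 + (-(u * z) + -z ^ 2) := by rw [hu_def]; ring
        rw [hsq, exp_add, exp_add, mul_div_cancel_left₀ _ hu.ne', mul_pow, inv_pow]
        field_simp
    _ = exp (-s ^ 2) * u⁻¹ ^ n * (u⁻¹ * dampedGammaIntegral n u) := by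
        rw [integral_const_mul,
          integral_comp_mul_left_Ioi (fun w => w ^ n * exp (-w) * exp (-(w / u) ^ 2)) 0 hu,
          mul_zero, smul_eq_mul]
        rfl
    _ = exp (-s ^ 2) * u⁻¹ ^ (n + 1) * dampedGammaIntegral n u := by ring

lemma Phi_div_sq_eq_of_neg (δ : ℝ) {s : ℝ} (hs : s < 0) :
    Phi δ s / s ^ 2 =
      dampedGammaIntegral 1 (-2 * s) * dampedGammaIntegral 3 (-2 * s) /
          dampedGammaIntegral 2 (-2 * s) ^ 2 / s ^ 2 +
        4 * (1 + δ / 2) *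
          (dampedGammaIntegral 1 (-2 * s) / dampedGammaIntegral 2 (-2 * s)) ^ 2 := by
  rw [Phi, In_eq_of_neg 1 hs, In_eq_of_neg 2 hs, In_eq_of_neg 3 hs]
  generalize dampedGammaIntegral 1 (-2 * s) = G₁, dampedGammaIntegral 2 (-2 * s) = G₂,
    dampedGammaIntegral 3 (-2 * s) = G₃
  rcases eq_or_ne G₂ 0 with rfl | hG₂
  · simp
  · have hs₀ : s ≠ 0 := hs.ne
    simp only [inv_pow]
    field_simp
    ring

theorem Phi_limit_atBot (δ : ℝ) (hδ : 0 < δ) :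
    Tendsto (fun s => Phi δ s / s ^ 2) atBot (nhds (1 + δ / 2)) ∧
    Tendsto (fun s => Phi δ s) atBot atTop := by
  have hsq : Tendsto (fun s : ℝ => s ^ 2) atBot atTop := by
    simpa [Function.comp_def] using
      (tendsto_pow_atTop two_ne_zero).comp (tendsto_neg_atBot_atTop (G := ℝ))
  have hG (n : ℕ) : Tendsto (fun s => dampedGammaIntegral n (-2 * s)) atBot (𝓝 n !) :=
    (tendsto_dampedGammaIntegral_atTop n).comp
      (tendsto_id.const_mul_atBot_of_neg (by norm_num : (-2 : ℝ) < 0))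
  have hmodel := ((((hG 1).mul (hG 3)).div ((hG 2).pow 2) (by positivity)).div_atTop hsq).add
    ((((hG 1).div (hG 2) (by positivity)).pow 2).const_mul (4 * (1 + δ / 2)))
  have hlim : Tendsto (fun s => Phi δ s / s ^ 2) atBot (𝓝 (1 + δ / 2)) := by
    refine (hmodel.congr' ?_).trans_eq (by norm_num [Nat.factorial]; ring)
    filter_upwards [eventually_lt_atBot 0] with s hs
    exact (Phi_div_sq_eq_of_neg δ hs).symm
  refine ⟨hlim, (hlim.pos_mul_atTop (by positivity) hsq).congr' ?_⟩
  filter_upwards [eventually_lt_atBot 0] with s hs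
  exact div_mul_cancel₀ _ (pow_ne_zero 2 hs.ne)
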